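/- For all stochastic matrices p and q on a nonempty finite set S, Doeblin's ergodicity coefficient satisfies α(p·q) ≥ max{α(p), α(q)}; in particular, for any sequence of stochastic matrices, the Doeblin coefficient of partial products is nondecreasing as more factors are multiplied on either side. -/

import Mathlib

/-! The row vector `m` of column minima of `p` lies below every row of `p`, so `m q` lies below
every row of `p q`, and it has the same mass as `m` because the rows of `q` sum to one. On the other
side, each row of `p q` is a convex combination of rows of `q`, hence lies above the column minima
of `q`. -/

/-- A stochastic matrix on a finite set `S`: nonnegative entries, each row sums to 1. -/
def IsStochastic {S : Type*} [Fintype S] (p : Matrix S S ℝ) : Prop :=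
  (∀ i j, 0 ≤ p i j) ∧ ∀ i, ∑ j, p i j = 1

/-- A matrix all of whose rows are identical. -/
def IsConstRow {S : Type*} (E : Matrix S S ℝ) : Prop :=
  ∀ i i' j, E i j = E i' j

/-- Doeblin's ergodicity coefficient `α(p) = Σ_j min_i p(i,j)`. -/
noncomputable def doeblin {S : Type*} [Fintype S] [Nonempty S] (p : Matrix S S ℝ) : ℝ :=
  ∑ j, Finset.univ.inf' Finset.univ_nonempty fun i => p i j

section

open Matrix

variable {S : Type*} [Fintype S]

theorem IsStochastic.sum_mul_const {p : Matrix S S ℝ} (hp : IsStochastic p) (i : S) (c : ℝ) :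
    ∑ k, p i k * c = c := by
  rw [← Finset.sum_mul, hp.2 i, one_mul]

variable [Nonempty S]

noncomputable def colMin (p : Matrix S S ℝ) (j : S) : ℝ :=
  Finset.univ.inf' Finset.univ_nonempty fun i => p i j

theorem doeblin_eq_sum_colMin (p : Matrix S S ℝ) : doeblin p = ∑ j, colMin p j := rfl

theorem colMin_le (p : Matrix S S ℝ) (i j : S) : colMin p j ≤ p i j :=
  Finset.inf'_le _ (Finset.mem_univ i)

theorem le_colMin {p : Matrix S S ℝ} {j : S} {c : ℝ} (h : ∀ i, c ≤ p i j) : c ≤ colMin p j :=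
  Finset.le_inf' _ _ fun i _ => h i

theorem sum_le_doeblin {p : Matrix S S ℝ} {v : S → ℝ} (h : ∀ i j, v j ≤ p i j) :
    ∑ j, v j ≤ doeblin p :=
  Finset.sum_le_sum fun j _ => le_colMin fun i => h i j

theorem doeblin_le_doeblin_mul_of_isStochastic_right (p : Matrix S S ℝ) {q : Matrix S S ℝ}
    (hq : IsStochastic q) : doeblin p ≤ doeblin (p * q) := by
  have hmass : ∑ j, (colMin p ᵥ* q) j = doeblin p := by
    simp only [Matrix.vecMul, dotProduct]
    rw [Finset.sum_comm, doeblin_eq_sum_colMin]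
    simp only [← Finset.mul_sum, hq.2, mul_one]
  rw [← hmass]
  refine sum_le_doeblin fun i j => Finset.sum_le_sum fun k _ => ?_
  exact mul_le_mul_of_nonneg_right (colMin_le p i k) (hq.1 k j)

theorem doeblin_le_doeblin_mul_of_isStochastic_left {p : Matrix S S ℝ} (hp : IsStochastic p)
    (q : Matrix S S ℝ) : doeblin q ≤ doeblin (p * q) := by
  refine sum_le_doeblin fun i j => ?_
  calc colMin q j = ∑ k, p i k * colMin q j := (hp.sum_mul_const i _).symm
    _ ≤ ∑ k, p i k * q k j :=
      Finset.sum_le_sum fun k _ => mul_le_mul_of_nonneg_left (colMin_le q k j) (hp.1 i k)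

end

theorem doeblin_mul_ge_max {S : Type*} [Fintype S] [Nonempty S]
    (p q : Matrix S S ℝ) (hp : IsStochastic p) (hq : IsStochastic q) :
    max (doeblin p) (doeblin q) ≤ doeblin (p * q) :=
  max_le (doeblin_le_doeblin_mul_of_isStochastic_right p hq)
    (doeblin_le_doeblin_mul_of_isStochastic_left hp q)
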